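/- Let u⁽¹⁾,...,u⁽ⁿ⁾, v⁽¹⁾,...,v⁽ⁿ⁾ ∈ ℝ^d and define f : ℝ^d → ℝ by f(x) = (1/√2) Σ_{i=1}^n √(‖x ⊙ u⁽ⁱ⁾ - v⁽ⁱ⁾‖² + ‖x ⊙ v⁽ⁱ⁾ - u⁽ⁱ⁾‖²). If a ∈ ℝ^d has all nonnegative coordinates and a is a global minimizer of f, then f(𝟏) ≤ √2 · f(a), where 𝟏 is the all-ones vector. -/

import Mathlib

/-! Write `√2 · f x = ∑ i, ‖r i x‖` with `r i x = (x ⊙ u i - v i, x ⊙ v i - u i)`, affine in `x`,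
and let `R i = r i 𝟏 = (u i - v i, v i - u i)`. Since `a ≥ 0`, `‖R i‖² ≤ 2 ⟪r i a, R i⟫`: the
difference is `2 ∑ k, a k (u i k - v i k)²`. Minimality of `a` along the ray `a + t (a - 𝟏)`,
`t > 0`, gives the first-order condition `∑ i, ⟪r i a, r i a - R i⟫ / ‖r i a‖ ≥ 0`, and AM-GM,
`√2 ‖R‖ ≤ ‖r‖ + ‖R‖² / (2 ‖r‖) ≤ ‖r‖ + ⟪r, R⟫ / ‖r‖`, summed over `i` gives
`√2 ∑ i, ‖R i‖ ≤ 2 ∑ i, ‖r i a‖`. -/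

noncomputable def had {d : ℕ} (x y : EuclideanSpace ℝ (Fin d)) :
    EuclideanSpace ℝ (Fin d) := WithLp.toLp 2 (fun k => x k * y k)

open Filter Topology RealInnerProductSpace

section SumOfNorms

variable {ι F : Type*} [Fintype ι] [NormedAddCommGroup F] [InnerProductSpace ℝ F]

theorem nonneg_of_forall_pos_nonneg_add_mul {A B : ℝ} (h : ∀ t > 0, 0 ≤ A + t * B) : 0 ≤ A := by
  have hlim : Tendsto (fun t : ℝ => A + t * B) (𝓝[>] 0) (𝓝 A) := by
    have : Continuous fun t : ℝ => A + t * B := by fun_prop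
    simpa using (this.tendsto 0).mono_left nhdsWithin_le_nhds
  exact ge_of_tendsto hlim (eventually_nhdsWithin_of_forall h)

theorem norm_add_smul_le_of_ne_zero {r : F} (hr : r ≠ 0) (w : F) (t : ℝ) :
    ‖r + t • w‖ ≤ ‖r‖ + t * (⟪r, w⟫ / ‖r‖) + t ^ 2 * (‖w‖ ^ 2 / (2 * ‖r‖)) := by
  have hr : 0 < ‖r‖ := norm_pos_iff.2 hr
  have hexp : ‖r + t • w‖ ^ 2 = ‖r‖ ^ 2 + 2 * t * ⟪r, w⟫ + t ^ 2 * ‖w‖ ^ 2 := by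
    rw [norm_add_sq_real, inner_smul_right, norm_smul, mul_pow, Real.norm_eq_abs, sq_abs]
    ring
  have hrhs : ‖r‖ + t * (⟪r, w⟫ / ‖r‖) + t ^ 2 * (‖w‖ ^ 2 / (2 * ‖r‖))
      = (‖r‖ ^ 2 + ‖r + t • w‖ ^ 2) / (2 * ‖r‖) := by
    rw [hexp]; field_simp; ring
  rw [hrhs, le_div_iff₀ (by positivity)]
  nlinarith [sq_nonneg (‖r‖ - ‖r + t • w‖)]

/-- The sum is the right derivative of `t ↦ ∑ i, ‖r i + t • w i‖` at `0` only because `w i = 0`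
wherever `r i = 0` (where the quotient is `0` by convention). -/
theorem sum_inner_div_norm_nonneg (r w : ι → F) (hw : ∀ i, r i = 0 → w i = 0)
    (hmin : ∀ t : ℝ, 0 < t → ∑ i, ‖r i‖ ≤ ∑ i, ‖r i + t • w i‖) :
    0 ≤ ∑ i, ⟪r i, w i⟫ / ‖r i‖ := by
  set A := ∑ i, ⟪r i, w i⟫ / ‖r i‖
  set B := ∑ i, ‖w i‖ ^ 2 / (2 * ‖r i‖)
  have hle : ∀ t i, ‖r i + t • w i‖ ≤
      ‖r i‖ + t * (⟪r i, w i⟫ / ‖r i‖) + t ^ 2 * (‖w i‖ ^ 2 / (2 * ‖r i‖)) := by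
    intro t i
    by_cases hr : r i = 0
    · simp [hr, hw i hr]
    · exact norm_add_smul_le_of_ne_zero hr _ _
  refine nonneg_of_forall_pos_nonneg_add_mul (B := B) fun t ht => ?_
  have hsum : ∑ i, ‖r i‖ ≤ ∑ i, ‖r i‖ + t * A + t ^ 2 * B := by
    calc ∑ i, ‖r i‖ ≤ ∑ i, ‖r i + t • w i‖ := hmin t ht
      _ ≤ ∑ i, (‖r i‖ + t * (⟪r i, w i⟫ / ‖r i‖) + t ^ 2 * (‖w i‖ ^ 2 / (2 * ‖r i‖))) :=
        Finset.sum_le_sum fun i _ => hle t i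
      _ = ∑ i, ‖r i‖ + t * A + t ^ 2 * B := by
        simp only [Finset.sum_add_distrib, Finset.mul_sum, A, B]
  nlinarith

theorem sqrt_two_mul_norm_le {r R : F} (hR : ‖R‖ ^ 2 ≤ 2 * ⟪r, R⟫) :
    √2 * ‖R‖ ≤ 2 * ‖r‖ - ⟪r, r - R⟫ / ‖r‖ := by
  rcases eq_or_ne r 0 with rfl | hr
  · have : ‖R‖ = 0 := by simpa using hR
    simp [this]
  have hr : 0 < ‖r‖ := norm_pos_iff.2 hr
  have hrhs : 2 * ‖r‖ - ⟪r, r - R⟫ / ‖r‖ = (‖r‖ ^ 2 + ⟪r, R⟫) / ‖r‖ := by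
    rw [inner_sub_right, real_inner_self_eq_norm_sq]; field_simp; ring
  rw [hrhs, le_div_iff₀ hr]
  nlinarith [sq_nonneg (√2 * ‖r‖ - ‖R‖), Real.sq_sqrt (zero_le_two : (0 : ℝ) ≤ 2)]

theorem sum_norm_le_sqrt_two_mul_sum_norm (r R : ι → F) (hR : ∀ i, ‖R i‖ ^ 2 ≤ 2 * ⟪r i, R i⟫)
    (hmin : ∀ t : ℝ, 0 < t → ∑ i, ‖r i‖ ≤ ∑ i, ‖r i + t • (r i - R i)‖) :
    ∑ i, ‖R i‖ ≤ √2 * ∑ i, ‖r i‖ := by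
  have hw : ∀ i, r i = 0 → r i - R i = 0 := by
    intro i hr
    have : ‖R i‖ = 0 := by simpa [hr] using hR i
    simp [hr, norm_eq_zero.1 this]
  have hderiv := sum_inner_div_norm_nonneg r (fun i => r i - R i) hw hmin
  have h : √2 * ∑ i, ‖R i‖ ≤ 2 * ∑ i, ‖r i‖ := by
    calc √2 * ∑ i, ‖R i‖ ≤ ∑ i, (2 * ‖r i‖ - ⟪r i, r i - R i⟫ / ‖r i‖) := by
          rw [Finset.mul_sum]; exact Finset.sum_le_sum fun i _ => sqrt_two_mul_norm_le (hR i)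
      _ ≤ 2 * ∑ i, ‖r i‖ := by
          rw [Finset.sum_sub_distrib, ← Finset.mul_sum]; linarith
  refine le_of_mul_le_mul_left ?_ (Real.sqrt_pos.2 two_pos)
  rwa [← mul_assoc, Real.mul_self_sqrt zero_le_two]

end SumOfNorms

section Residual

variable {d : ℕ}

local notation "E" => EuclideanSpace ℝ (Fin d)

noncomputable def hadResidual (u v x : E) : WithLp 2 (E × E) :=
  WithLp.toLp 2 (had x u - v, had x v - u)

theorem norm_hadResidual (u v x : E) :
    ‖hadResidual u v x‖ = √(‖had x u - v‖ ^ 2 + ‖had x v - u‖ ^ 2) :=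
  WithLp.prod_norm_eq_of_L2 _

theorem hadResidual_add_smul_sub (u v x y : E) (t : ℝ) :
    hadResidual u v (x + t • (x - y))
      = hadResidual u v x + t • (hadResidual u v x - hadResidual u v y) := by
  apply WithLp.ofLp_injective
  ext k <;>
    simp only [hadResidual, had, PiLp.add_apply, PiLp.smul_apply, PiLp.sub_apply, smul_eq_mul,
      WithLp.ofLp_add, WithLp.ofLp_smul, WithLp.ofLp_sub, Prod.mk_sub_mk, Prod.smul_mk,
      Prod.mk_add_mk] <;>
    ring

theorem norm_hadResidual_one_sq_le {a : E} (ha : ∀ k, 0 ≤ a k) (u v : E) :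
    ‖hadResidual u v (WithLp.toLp 2 fun _ => 1)‖ ^ 2
      ≤ 2 * ⟪hadResidual u v a, hadResidual u v (WithLp.toLp 2 fun _ => 1)⟫ := by
  rw [WithLp.prod_norm_sq_eq_of_L2, WithLp.prod_inner_apply]
  simp only [hadResidual, had, EuclideanSpace.real_norm_sq_eq, PiLp.inner_apply, one_mul,
    WithLp.toLp_ofLp, WithLp.toLp_fst, WithLp.toLp_snd, PiLp.sub_apply, RCLike.inner_apply,
    Real.ringHom_apply, ← Finset.sum_add_distrib, Finset.mul_sum]
  refine Finset.sum_le_sum fun k _ => ?_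
  nlinarith [mul_nonneg (ha k) (sq_nonneg (u k - v k))]

end Residual

theorem f_one_le_sqrt_two_f_min {d n : ℕ}
    (u v : Fin n → EuclideanSpace ℝ (Fin d))
    (f : EuclideanSpace ℝ (Fin d) → ℝ)
    (hf : ∀ x, f x = (1 / Real.sqrt 2) *
      ∑ i, Real.sqrt (‖had x (u i) - v i‖ ^ 2 + ‖had x (v i) - u i‖ ^ 2))
    (a : EuclideanSpace ℝ (Fin d)) (ha : ∀ k, 0 ≤ a k)
    (hmin : ∀ x, f a ≤ f x) :
    f (WithLp.toLp 2 (fun _ => 1)) ≤ Real.sqrt 2 * f a := by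
  have hf' : ∀ x, f x = (√2)⁻¹ * ∑ i, ‖hadResidual (u i) (v i) x‖ := by
    simp only [hf, norm_hadResidual, one_div, implies_true]
  have hray : ∀ t : ℝ, 0 < t → ∑ i, ‖hadResidual (u i) (v i) a‖ ≤
      ∑ i, ‖hadResidual (u i) (v i) a + t • (hadResidual (u i) (v i) a
        - hadResidual (u i) (v i) (WithLp.toLp 2 fun _ => 1))‖ := by
    intro t _
    have h := hmin (a + t • (a - WithLp.toLp 2 fun _ => 1))
    simp only [hf', hadResidual_add_smul_sub] at h
    exact le_of_mul_le_mul_left h (by positivity)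
  have key := sum_norm_le_sqrt_two_mul_sum_norm _ _
    (fun i => norm_hadResidual_one_sq_le ha (u i) (v i)) hray
  rw [hf', hf', ← mul_assoc, mul_inv_cancel₀ (by positivity), one_mul]
  exact (inv_mul_le_iff₀ (by positivity)).2 key
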